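/- lim_{ρ → 1⁻} [ (1/π)·( √(1-ρ²) − ρ·arccos ρ ) − (2√2/(3π))·(1-ρ)^{3/2} ] / (1-ρ)^{5/2} = √2 / (30π). That is, the infinite-width ReLU correlation map satisfies c K₁(ρ) = ρ + (2√2/(3π))(1-ρ)^{3/2} + (√2/(30π))(1-ρ)^{5/2} + o((1-ρ)^{5/2}) as ρ → 1⁻. -/

import Mathlib

open Real Filter Set Topology

noncomputable def Fa (ρ : ℝ) : ℝ :=
  (1 / π) * (Real.sqrt (1 - ρ ^ 2) - ρ * Real.arccos ρ)
    - (2 * Real.sqrt 2 / (3 * π)) * (Real.sqrt (1 - ρ)) ^ 3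
noncomputable def Ga (ρ : ℝ) : ℝ := (Real.sqrt (1 - ρ)) ^ 5
noncomputable def Fa' (ρ : ℝ) : ℝ := (Real.sqrt 2 * Real.sqrt (1 - ρ) - Real.arccos ρ) / π
noncomputable def Ga' (ρ : ℝ) : ℝ := -(5 / 2) * (Real.sqrt (1 - ρ)) ^ 3
noncomputable def Fa'' (ρ : ℝ) : ℝ :=
  (1 / Real.sqrt (1 - ρ ^ 2) - Real.sqrt 2 / (2 * Real.sqrt (1 - ρ))) / π
noncomputable def Ga'' (ρ : ℝ) : ℝ := (15 / 4) * Real.sqrt (1 - ρ)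

lemma rpow_three_halves {x : ℝ} (hx : 0 ≤ x) : x ^ ((3:ℝ)/2) = (Real.sqrt x) ^ 3 := by
  rw [show (3:ℝ)/2 = (1/2) * ((3:ℕ):ℝ) by norm_num, Real.rpow_mul hx, Real.rpow_natCast,
    ← Real.sqrt_eq_rpow]

lemma rpow_five_halves {x : ℝ} (hx : 0 ≤ x) : x ^ ((5:ℝ)/2) = (Real.sqrt x) ^ 5 := by
  rw [show (5:ℝ)/2 = (1/2) * ((5:ℕ):ℝ) by norm_num, Real.rpow_mul hx, Real.rpow_natCast,
    ← Real.sqrt_eq_rpow]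

lemma hF (ρ : ℝ) (hρ : ρ ∈ Ioo (0:ℝ) 1) : HasDerivAt Fa (Fa' ρ) ρ := by
  obtain ⟨h0, h1⟩ := hρ
  have h1ρ : (0:ℝ) < 1 - ρ := by linarith
  have h1ρ2 : (0:ℝ) < 1 - ρ ^ 2 := by nlinarith
  have hs : Real.sqrt (1 - ρ) ≠ 0 := (Real.sqrt_pos.2 h1ρ).ne'
  have hs2 : Real.sqrt (1 - ρ ^ 2) ≠ 0 := (Real.sqrt_pos.2 h1ρ2).ne'
  have d1 : HasDerivAt (fun ρ : ℝ => 1 - ρ ^ 2) (-(2*ρ)) ρ := by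
    simpa using (hasDerivAt_pow 2 ρ).const_sub 1
  have d2 : HasDerivAt (fun ρ : ℝ => Real.sqrt (1 - ρ ^ 2))
      (-(2*ρ) / (2 * Real.sqrt (1 - ρ ^ 2))) ρ := d1.sqrt h1ρ2.ne'
  have d3 : HasDerivAt Real.arccos (-(1 / Real.sqrt (1 - ρ ^ 2))) ρ :=
    Real.hasDerivAt_arccos (by linarith) h1.ne
  have d4 : HasDerivAt (fun ρ : ℝ => ρ * Real.arccos ρ)
      (Real.arccos ρ + ρ * -(1 / Real.sqrt (1 - ρ ^ 2))) ρ := by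
    simpa using (hasDerivAt_id ρ).fun_mul d3
  have d5 : HasDerivAt (fun ρ : ℝ => 1 - ρ) (-1) ρ := by
    simpa using (hasDerivAt_id ρ).const_sub 1
  have d6 : HasDerivAt (fun ρ : ℝ => Real.sqrt (1 - ρ)) (-1 / (2 * Real.sqrt (1 - ρ))) ρ :=
    d5.sqrt h1ρ.ne'
  have d7 : HasDerivAt (fun ρ : ℝ => (Real.sqrt (1 - ρ)) ^ 3)
      (3 * (Real.sqrt (1 - ρ)) ^ 2 * (-1 / (2 * Real.sqrt (1 - ρ)))) ρ := by
    simpa using d6.fun_pow 3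
  have := (((d2.sub d4).const_mul (1/π)).sub (d7.const_mul (2 * Real.sqrt 2 / (3 * π))))
  refine this.congr_deriv ?_
  unfold Fa'
  have hsq : (Real.sqrt (1 - ρ)) ^ 2 = 1 - ρ := Real.sq_sqrt h1ρ.le
  have e1 : -(2*ρ) / (2 * Real.sqrt (1 - ρ ^ 2)) - (Real.arccos ρ + ρ * -(1 / Real.sqrt (1 - ρ ^ 2)))
      = -Real.arccos ρ := by
    field_simp
    ring
  have e2 : 3 * (Real.sqrt (1 - ρ)) ^ 2 * (-1 / (2 * Real.sqrt (1 - ρ)))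
      = -(3/2) * Real.sqrt (1 - ρ) := by
    field_simp
  rw [e1, e2]
  field_simp
  ring

lemma hG (ρ : ℝ) (hρ : ρ ∈ Ioo (0:ℝ) 1) : HasDerivAt Ga (Ga' ρ) ρ := by
  obtain ⟨h0, h1⟩ := hρ
  have h1ρ : (0:ℝ) < 1 - ρ := by linarith
  have hs : Real.sqrt (1 - ρ) ≠ 0 := (Real.sqrt_pos.2 h1ρ).ne'
  have d5 : HasDerivAt (fun ρ : ℝ => 1 - ρ) (-1) ρ := by
    simpa using (hasDerivAt_id ρ).const_sub 1
  have d6 : HasDerivAt (fun ρ : ℝ => Real.sqrt (1 - ρ)) (-1 / (2 * Real.sqrt (1 - ρ))) ρ :=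
    d5.sqrt h1ρ.ne'
  have d7 : HasDerivAt (fun ρ : ℝ => (Real.sqrt (1 - ρ)) ^ 5)
      (5 * (Real.sqrt (1 - ρ)) ^ 4 * (-1 / (2 * Real.sqrt (1 - ρ)))) ρ := by
    simpa using d6.fun_pow 5
  refine d7.congr_deriv ?_
  unfold Ga'
  field_simp

lemma hF' (ρ : ℝ) (hρ : ρ ∈ Ioo (0:ℝ) 1) : HasDerivAt Fa' (Fa'' ρ) ρ := by
  obtain ⟨h0, h1⟩ := hρ
  have h1ρ : (0:ℝ) < 1 - ρ := by linarith
  have h1ρ2 : (0:ℝ) < 1 - ρ ^ 2 := by nlinarith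
  have d5 : HasDerivAt (fun ρ : ℝ => 1 - ρ) (-1) ρ := by
    simpa using (hasDerivAt_id ρ).const_sub 1
  have d6 : HasDerivAt (fun ρ : ℝ => Real.sqrt (1 - ρ)) (-1 / (2 * Real.sqrt (1 - ρ))) ρ :=
    d5.sqrt h1ρ.ne'
  have d3 : HasDerivAt Real.arccos (-(1 / Real.sqrt (1 - ρ ^ 2))) ρ :=
    Real.hasDerivAt_arccos (by linarith) h1.ne
  have := ((d6.const_mul (Real.sqrt 2)).sub d3).div_const π
  refine this.congr_deriv ?_
  unfold Fa''
  field_simp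
  ring

lemma hG' (ρ : ℝ) (hρ : ρ ∈ Ioo (0:ℝ) 1) : HasDerivAt Ga' (Ga'' ρ) ρ := by
  obtain ⟨h0, h1⟩ := hρ
  have h1ρ : (0:ℝ) < 1 - ρ := by linarith
  have hs : Real.sqrt (1 - ρ) ≠ 0 := (Real.sqrt_pos.2 h1ρ).ne'
  have d5 : HasDerivAt (fun ρ : ℝ => 1 - ρ) (-1) ρ := by
    simpa using (hasDerivAt_id ρ).const_sub 1
  have d6 : HasDerivAt (fun ρ : ℝ => Real.sqrt (1 - ρ)) (-1 / (2 * Real.sqrt (1 - ρ))) ρ :=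
    d5.sqrt h1ρ.ne'
  have d7 : HasDerivAt (fun ρ : ℝ => (Real.sqrt (1 - ρ)) ^ 3)
      (3 * (Real.sqrt (1 - ρ)) ^ 2 * (-1 / (2 * Real.sqrt (1 - ρ)))) ρ := by
    simpa using d6.fun_pow 3
  refine (d7.const_mul (-(5/2) : ℝ)).congr_deriv ?_
  unfold Ga''
  field_simp
  nlinarith [Real.sq_sqrt h1ρ.le]

-- key algebraic identity
lemma ratio_eq (ρ : ℝ) (hρ : ρ ∈ Ioo (0:ℝ) 1) :
    Fa'' ρ / Ga'' ρ =
      2 * Real.sqrt 2 / (15 * π * (Real.sqrt (1 + ρ) * (Real.sqrt 2 + Real.sqrt (1 + ρ)))) := by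
  obtain ⟨h0, h1⟩ := hρ
  have h1ρ : (0:ℝ) < 1 - ρ := by linarith
  have h1ρ' : (0:ℝ) < 1 + ρ := by linarith
  have ha : (0:ℝ) < Real.sqrt (1 - ρ) := Real.sqrt_pos.2 h1ρ
  have hb : (0:ℝ) < Real.sqrt (1 + ρ) := Real.sqrt_pos.2 h1ρ'
  have hc : (0:ℝ) < Real.sqrt 2 := Real.sqrt_pos.2 (by norm_num)
  have hsplit : Real.sqrt (1 - ρ ^ 2) = Real.sqrt (1 - ρ) * Real.sqrt (1 + ρ) := by
    rw [show 1 - ρ ^ 2 = (1 - ρ) * (1 + ρ) by ring, Real.sqrt_mul h1ρ.le]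
  have ha2 : Real.sqrt (1 - ρ) ^ 2 = 1 - ρ := Real.sq_sqrt h1ρ.le
  have hb2 : Real.sqrt (1 + ρ) ^ 2 = 1 + ρ := Real.sq_sqrt h1ρ'.le
  have hc2 : Real.sqrt 2 ^ 2 = 2 := Real.sq_sqrt (by norm_num)
  unfold Fa'' Ga''
  rw [hsplit]
  have hbc : Real.sqrt 2 + Real.sqrt (1 + ρ) ≠ 0 := by positivity
  have hπ : π ≠ 0 := Real.pi_ne_zero
  have hsum : Real.sqrt (1 - ρ) ^ 2 + Real.sqrt (1 + ρ) ^ 2 = 2 := by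
    rw [ha2, hb2]; ring
  field_simp
  linear_combination (-4*Real.sqrt (1+ρ)) * hc2
    + (-4*Real.sqrt 2) * hsum

lemma sqrt2_mul_self : Real.sqrt 2 * Real.sqrt 2 = 2 := Real.mul_self_sqrt (by norm_num)

lemma tendsto_ratio :
    Tendsto (fun ρ => Fa'' ρ / Ga'' ρ) (nhdsWithin 1 (Set.Iio 1)) (nhds (Real.sqrt 2 / (30 * π))) := by
  have hIoo : Ioo (0:ℝ) 1 ∈ 𝓝[<] (1:ℝ) := Ioo_mem_nhdsLT_of_mem (by norm_num)
  have heq : (fun ρ => 2 * Real.sqrt 2 /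
      (15 * π * (Real.sqrt (1 + ρ) * (Real.sqrt 2 + Real.sqrt (1 + ρ)))))
      =ᶠ[𝓝[<] (1:ℝ)] (fun ρ => Fa'' ρ / Ga'' ρ) := by
    filter_upwards [hIoo] with ρ hρ
    exact (ratio_eq ρ hρ).symm
  refine Tendsto.congr' heq ?_
  have hc : ContinuousAt (fun ρ : ℝ => 2 * Real.sqrt 2 /
      (15 * π * (Real.sqrt (1 + ρ) * (Real.sqrt 2 + Real.sqrt (1 + ρ))))) 1 := by
    apply ContinuousAt.div
    · fun_prop
    · fun_prop
    · have h2 : Real.sqrt (1 + (1:ℝ)) = Real.sqrt 2 := by norm_num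
      rw [h2]
      have : Real.sqrt 2 * (Real.sqrt 2 + Real.sqrt 2) = 4 := by
        have := sqrt2_mul_self; nlinarith
      rw [this]
      positivity
  have hval : 2 * Real.sqrt 2 /
      (15 * π * (Real.sqrt (1 + (1:ℝ)) * (Real.sqrt 2 + Real.sqrt (1 + (1:ℝ)))))
      = Real.sqrt 2 / (30 * π) := by
    have h2 : Real.sqrt (1 + (1:ℝ)) = Real.sqrt 2 := by norm_num
    rw [h2]
    have h4 : Real.sqrt 2 * (Real.sqrt 2 + Real.sqrt 2) = 4 := by
      have := sqrt2_mul_self; nlinarith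
    rw [h4]
    ring
  rw [← hval]
  exact (hc.tendsto).mono_left nhdsWithin_le_nhds

lemma tendsto_F_zero : Tendsto Fa (𝓝[<] (1:ℝ)) (𝓝 0) := by
  have hc : ContinuousAt Fa 1 := by
    unfold Fa
    have harc : Continuous Real.arccos := Real.continuous_arccos
    fun_prop [Real.pi_ne_zero]
  have hval : Fa 1 = 0 := by
    unfold Fa
    norm_num [Real.arccos_one]
  rw [← hval]
  exact hc.tendsto.mono_left nhdsWithin_le_nhds

lemma tendsto_G_zero : Tendsto Ga (𝓝[<] (1:ℝ)) (𝓝 0) := by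
  have hc : ContinuousAt Ga 1 := by unfold Ga; fun_prop
  have hval : Ga 1 = 0 := by unfold Ga; norm_num
  rw [← hval]
  exact hc.tendsto.mono_left nhdsWithin_le_nhds

lemma tendsto_F'_zero : Tendsto Fa' (𝓝[<] (1:ℝ)) (𝓝 0) := by
  have hc : ContinuousAt Fa' 1 := by
    unfold Fa'
    have harc : Continuous Real.arccos := Real.continuous_arccos
    fun_prop [Real.pi_ne_zero]
  have hval : Fa' 1 = 0 := by unfold Fa'; norm_num [Real.arccos_one]
  rw [← hval]
  exact hc.tendsto.mono_left nhdsWithin_le_nhds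

lemma tendsto_G'_zero : Tendsto Ga' (𝓝[<] (1:ℝ)) (𝓝 0) := by
  have hc : ContinuousAt Ga' 1 := by unfold Ga'; fun_prop
  have hval : Ga' 1 = 0 := by unfold Ga'; norm_num
  rw [← hval]
  exact hc.tendsto.mono_left nhdsWithin_le_nhds

/-- `[(1/π)(√(1-ρ²) − ρ arccos ρ) − (2√2/(3π))(1-ρ)^{3/2}]/(1-ρ)^{5/2} → √2/(30π)`
as `ρ → 1⁻`. -/
theorem relu_corr_expansion_second_order :
    Tendsto
      (fun ρ : ℝ =>
        ((1 / π) * (Real.sqrt (1 - ρ ^ 2) - ρ * Real.arccos ρ)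
            - (2 * Real.sqrt 2 / (3 * π)) * (1 - ρ) ^ ((3 : ℝ) / 2))
          / (1 - ρ) ^ ((5 : ℝ) / 2))
      (nhdsWithin 1 (Set.Iio 1))
      (nhds (Real.sqrt 2 / (30 * π))) := by
  have hIoo : Ioo (0:ℝ) 1 ∈ 𝓝[<] (1:ℝ) := Ioo_mem_nhdsLT_of_mem (by norm_num)
  have key : Tendsto (fun ρ => Fa ρ / Ga ρ) (𝓝[<] (1:ℝ)) (𝓝 (Real.sqrt 2 / (30 * π))) := by
    apply HasDerivAt.lhopital_zero_nhdsLT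
      (f' := Fa') (g' := Ga')
    · filter_upwards [hIoo] with ρ hρ; exact hF ρ hρ
    · filter_upwards [hIoo] with ρ hρ; exact hG ρ hρ
    · filter_upwards [hIoo] with ρ hρ
      have : (0:ℝ) < Real.sqrt (1 - ρ) := Real.sqrt_pos.2 (by linarith [hρ.2])
      unfold Ga'
      positivity
    · exact tendsto_F_zero
    · exact tendsto_G_zero
    · apply HasDerivAt.lhopital_zero_nhdsLT (f' := Fa'') (g' := Ga'')
      · filter_upwards [hIoo] with ρ hρ; exact hF' ρ hρ
      · filter_upwards [hIoo] with ρ hρ; exact hG' ρ hρ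
      · filter_upwards [hIoo] with ρ hρ
        have : (0:ℝ) < Real.sqrt (1 - ρ) := Real.sqrt_pos.2 (by linarith [hρ.2])
        unfold Ga''
        positivity
      · exact tendsto_F'_zero
      · exact tendsto_G'_zero
      · exact tendsto_ratio
  refine Tendsto.congr' ?_ key
  filter_upwards [self_mem_nhdsWithin] with ρ hρ
  have h1ρ : (0:ℝ) ≤ 1 - ρ := by
    have : ρ < 1 := hρ
    linarith
  unfold Fa Ga
  rw [rpow_three_halves h1ρ, rpow_five_halves h1ρ]
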